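/- arXiv:2412.16331 — 13 statements merged into one kernel-verified Lean document; each statement's English description precedes it below -/
import Mathlib

section
/- If the preference relation R is isotone (i.e., gRg' implies (z+g)R(z+g') and (g+z)R(g'+z) for all z), and the efficient set of A is empty, then the efficient set of A+B equals the efficient set of A (both are empty). -/
open Pointwise

/-- Strict preference: x P y iff x R y and not y R x. -/
def StrictPref {G : Type*} (R : G → G → Prop) (x y : G) : Prop := R x y ∧ ¬ R y x

/-- Efficient set of S with respect to R. -/
def Eff {G : Type*} (R : G → G → Prop) (S : Set G) : Set G :=
  {g ∈ S | ∀ g' ∈ S, ¬ StrictPref R g' g}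

/-- R is isotone: comparisons are preserved under left and right addition. -/
def IsotoneRel {G : Type*} [Add G] (R : G → G → Prop) : Prop :=
  ∀ g g' z : G, R g g' → R (z + g) (z + g') ∧ R (g + z) (g' + z)

theorem stmt_0 {G : Type*} [AddGroup G] (R : G → G → Prop) (A B : Set G)
    (hA : A.Nonempty) (hB : B.Nonempty)
    (hrefl : Reflexive R) (hiso : IsotoneRel R)
    (hEA : Eff R A = ∅) :
    Eff R (A + B) = Eff R A := by
  rw [hEA, Set.eq_empty_iff_forall_notMem]
  rintro g ⟨hg, heff⟩
  obtain ⟨a, ha, b, hb, rfl⟩ := hg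
  -- a is not efficient in A
  have : a ∉ Eff R A := by rw [hEA]; exact Set.notMem_empty a
  simp only [Eff, Set.mem_setOf_eq, not_and, not_forall] at this
  obtain ⟨a', ha', hP⟩ := this ha
  rw [not_not] at hP
  apply heff (a' + b) (Set.add_mem_add ha' hb)
  obtain ⟨h1, h2⟩ := hP
  refine ⟨(hiso a' a b h1).2, fun hR => h2 ?_⟩
  have := (hiso (a + b) (a' + b) (-b) hR).2
  simpa [add_assoc] using this
end

section
/- If R is transitive, antisymmetric, and isotone, the identity 0_G belongs to B, and 0_G R b holds for every b ∈ B, then E(A+B) = E(A). -/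
open Pointwise

theorem stmt_1 {G : Type*} [AddGroup G] (R : G → G → Prop) (A B : Set G)
    (hA : A.Nonempty) (hB : B.Nonempty)
    (hrefl : Reflexive R) (htrans : Transitive R) (hanti : AntiSymmetric R)
    (hiso : IsotoneRel R)
    (h0B : (0 : G) ∈ B) (hdom : ∀ b ∈ B, R 0 b) :
    Eff R (A + B) = Eff R A := by
  have key : ∀ a : G, ∀ b ∈ B, R a (a + b) := by
    intro a b hb
    have := (hiso 0 b a (hdom b hb)).1
    simpa using this
  ext g
  constructor
  · rintro ⟨hgS, hg⟩
    obtain ⟨a, ha, b, hb, rfl⟩ := hgS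
    have haS : a ∈ A + B := ⟨a, ha, 0, h0B, by simp⟩
    have hag : R a (a + b) := key a b hb
    have hga : R (a + b) a := by
      by_contra h
      exact hg a haS ⟨hag, h⟩
    have heq : a + b = a := hanti hga hag
    simp only [heq] at hg ⊢
    refine ⟨ha, fun a' ha' hP => ?_⟩
    exact hg a' ⟨a', ha', 0, h0B, by simp⟩ hP
  · rintro ⟨haA, ha⟩
    refine ⟨⟨g, haA, 0, h0B, by simp⟩, ?_⟩
    rintro x ⟨a', ha', b', hb', rfl⟩ ⟨hxg, hgx⟩
    have h1 : R a' (a' + b') := key a' b' hb'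
    have h2 : R a' g := htrans h1 hxg
    have h3 : R g a' := by
      by_contra h
      exact ha a' ha' ⟨h2, h⟩
    have : a' = g := hanti h2 h3
    subst this
    exact hgx h1
end

section
/- Let B_1, ..., B_n be nonempty subsets of G such that for each i, 0_G ∈ B_i and 0_G R b for all b ∈ B_i. If R is transitive, antisymmetric, and isotone, then E(A + B_1 + ... + B_n) = E(A). -/
open Pointwise

lemma eff_add_eq {G : Type*} [AddGroup G] (R : G → G → Prop) (A S : Set G)
    (htrans : Transitive R) (hanti : AntiSymmetric R) (hiso : IsotoneRel R)
    (h0S : (0 : G) ∈ S) (hdomS : ∀ s ∈ S, R 0 s) :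
    Eff R (A + S) = Eff R A := by
  have hsub : A ⊆ A + S := fun a ha => ⟨a, ha, 0, h0S, add_zero a⟩
  ext x
  constructor
  · rintro ⟨hxS, hx⟩
    obtain ⟨a, ha, s, hs, rfl⟩ := hxS
    have haR : R a (a + s) := by
      have := (hiso 0 s a (hdomS s hs)).1
      simpa using this
    have haA : a ∈ A + S := hsub ha
    have hnot := hx a haA
    have hRas : R (a + s) a := by
      by_contra hcon
      exact hnot ⟨haR, hcon⟩
    have heq : a = a + s := hanti haR hRas
    have hmem : a + s ∈ A := by rw [← heq]; exact ha
    exact ⟨hmem, fun a' ha' hp => hx a' (hsub ha') hp⟩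
  · rintro ⟨hxA, hx⟩
    refine ⟨hsub hxA, ?_⟩
    rintro g' hg' ⟨hRg'x, hn⟩
    obtain ⟨a, ha, s, hs, rfl⟩ := hg'
    have haR : R a (a + s) := by
      have := (hiso 0 s a (hdomS s hs)).1
      simpa using this
    have hRax : R a x := htrans haR hRg'x
    refine hx a ha ⟨hRax, fun hxa => hn (htrans hxa haR)⟩

lemma sum_props {G : Type*} [AddGroup G] (R : G → G → Prop)
    (hrefl : Reflexive R) (htrans : Transitive R) (hiso : IsotoneRel R) (L : List (Set G))
    (h : ∀ S ∈ L, (0 : G) ∈ S ∧ ∀ b ∈ S, R 0 b) :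
    (0 : G) ∈ L.sum ∧ ∀ t ∈ L.sum, R 0 t := by
  induction L with
  | nil =>
    simp only [List.sum_nil]
    exact ⟨rfl, fun t ht => by rw [Set.mem_zero] at ht; subst ht; exact hrefl 0⟩
  | cons S L ih =>
    have hS := h S List.mem_cons_self
    have hL := ih (fun T hT => h T (List.mem_cons_of_mem S hT))
    rw [List.sum_cons]
    constructor
    · exact ⟨0, hS.1, 0, hL.1, add_zero 0⟩
    · rintro t ⟨b, hb, s, hs, rfl⟩
      have h1 : R 0 b := hS.2 b hb
      have h2 : R b (b + s) := by
        have := (hiso 0 s b (hL.2 s hs)).1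
        simpa using this
      exact htrans h1 h2

theorem stmt_2 {G : Type*} [AddGroup G] (R : G → G → Prop) (A : Set G)
    (hA : A.Nonempty)
    (hrefl : Reflexive R) (htrans : Transitive R) (hanti : AntiSymmetric R)
    (hiso : IsotoneRel R)
    (n : ℕ) (hn : 1 ≤ n) (B : Fin n → Set G)
    (hBne : ∀ i, (B i).Nonempty)
    (h0B : ∀ i, (0 : G) ∈ B i) (hdom : ∀ i, ∀ b ∈ B i, R 0 b) :
    Eff R (A + (List.ofFn B).sum) = Eff R A := by
  have h : ∀ S ∈ List.ofFn B, (0 : G) ∈ S ∧ ∀ b ∈ S, R 0 b := by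
    intro S hS
    rw [List.mem_ofFn] at hS
    obtain ⟨i, rfl⟩ := hS
    exact ⟨h0B i, hdom i⟩
  obtain ⟨h0, hd⟩ := sum_props R hrefl htrans hiso (List.ofFn B) h
  exact eff_add_eq R A _ htrans hanti hiso h0 hd
end

section
/- Suppose A+B ≠ A, E(A+B) is nonempty, R is isotone, and 0_G P b for all b ∈ B. Then E(A+B) ≠ E(A). -/
open Pointwise

theorem stmt_3 {G : Type*} [AddGroup G] (R : G → G → Prop) (A B : Set G)
    (hA : A.Nonempty) (hB : B.Nonempty)
    (hrefl : Reflexive R) (hiso : IsotoneRel R)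
    (hne : A + B ≠ A) (hEAB : (Eff R (A + B)).Nonempty)
    (hdom : ∀ b ∈ B, StrictPref R 0 b) :
    Eff R (A + B) ≠ Eff R A := by
  intro heq
  obtain ⟨x, hx⟩ := hEAB
  have hxA : x ∈ Eff R A := heq ▸ hx
  obtain ⟨a, ha, b, hb, rfl⟩ := hx.1
  obtain ⟨h0b, hnb0⟩ := hdom b hb
  have h1 : R a (a + b) := by
    have := (hiso 0 b a h0b).1
    simpa using this
  have h2 : ¬ R (a + b) a := by
    intro h
    have := (hiso (a + b) a (-a) h).1
    simp at this
    exact hnb0 this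
  exact hxA.2 a ha ⟨h1, h2⟩
end

section
/- Suppose A+B ≠ A, E(A) is nonempty, R is isotone, and there exists b° ∈ B with b° P 0_G. Then E(A+B) ≠ E(A). -/
open Pointwise

theorem stmt_4 {G : Type*} [AddGroup G] (R : G → G → Prop) (A B : Set G)
    (hA : A.Nonempty) (hB : B.Nonempty)
    (hrefl : Reflexive R) (hiso : IsotoneRel R)
    (hne : A + B ≠ A) (hEA : (Eff R A).Nonempty)
    (hdom : ∃ b ∈ B, StrictPref R b 0) :
    Eff R (A + B) ≠ Eff R A := by
  intro heq
  obtain ⟨a, haE⟩ := hEA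
  obtain ⟨b, hbB, hRb0, hnR0b⟩ := hdom
  have haA : a ∈ A := haE.1
  have haEAB : a ∈ Eff R (A + B) := heq ▸ haE
  have hmem : a + b ∈ A + B := Set.add_mem_add haA hbB
  refine haEAB.2 (a + b) hmem ⟨?_, ?_⟩
  · have := (hiso b 0 a hRb0).1
    simpa using this
  · intro h
    have := (hiso a (a + b) (-a) h).1
    simp at this
    exact hnR0b this
end

section
/- If R is antisymmetric and isotone, A is stable (i.e., E(A) = A), and B = {b} is a singleton, then A+B is stable, i.e., E(A+{b}) = A+{b}. -/
open Pointwise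

theorem stmt_5 {G : Type*} [AddGroup G] (R : G → G → Prop) (A : Set G) (b : G)
    (hA : A.Nonempty)
    (hrefl : Reflexive R) (hanti : AntiSymmetric R) (hiso : IsotoneRel R)
    (hstable : Eff R A = A) :
    Eff R (A + ({b} : Set G)) = A + ({b} : Set G) := by
  have key : ∀ x y : G, R (x + b) (y + b) → R x y := by
    intro x y h
    have := (hiso _ _ (-b) h).2
    simpa [add_assoc] using this
  apply Set.Subset.antisymm
  · intro x hx; exact hx.1
  · rintro x hx
    obtain ⟨a, ha, c, hc, rfl⟩ := hx
    rcases hc with rfl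
    refine ⟨⟨a, ha, c, rfl, rfl⟩, ?_⟩
    rintro g' ⟨a', ha', c', hc', rfl⟩ ⟨h1, h2⟩
    rcases hc' with rfl
    have ha'a : R a' a := key _ _ h1
    have hnaa' : ¬ R a a' := fun h => h2 ((hiso _ _ c' h).2)
    have haA : a ∈ Eff R A := by rw [hstable]; exact ha
    exact haA.2 a' ha' ⟨ha'a, hnaa'⟩
end

section
/- Suppose R satisfies isotonicity and: for all p ≥ 1 and b ∈ G, (pb)R0_G implies bR0_G. Let A = {a^1, ..., a^n} be n ≥ 1 distinct points in G and b ∈ G with b incomparable to 0_G (neither bR0_G nor 0_GRb). Then there is no function j : {1,...,n} → {1,...,n} such that a^i = a^{j(i)} + b for all i. Equivalently, if b is incomparable with 0_G, then A is not contained in A + {b}. -/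
open Pointwise

theorem stmt_9 {G : Type*} [AddGroup G] (R : G → G → Prop)
    (hrefl : Reflexive R) (hiso : IsotoneRel R)
    (hP4' : ∀ p : ℕ, 1 ≤ p → ∀ c : G, R (p • c) 0 → R c 0)
    (n : ℕ) (hn : 1 ≤ n) (a : Fin n → G) (hinj : Function.Injective a)
    (b : G) (hb : ¬ R b 0 ∧ ¬ R 0 b) :
    ¬ ∃ j : Fin n → Fin n, ∀ i, a i = a (j i) + b := by
  rintro ⟨j, hj⟩
  have key : ∀ t : ℕ, ∀ i : Fin n, a i = a (j^[t] i) + t • b := by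
    intro t
    induction t with
    | zero => intro i; simp
    | succ t ih =>
      intro i
      have h1 : a i = a (j i) + b := hj i
      have h2 : a (j i) = a (j^[t] (j i)) + t • b := ih (j i)
      rw [h1, h2, Function.iterate_succ_apply, succ_nsmul, add_assoc]
  obtain ⟨k, l, hne, heq⟩ := Finite.exists_ne_map_eq_of_infinite (fun k : ℕ => j^[k] ⟨0, hn⟩)
  wlog hkl : k < l generalizing k l
  · exact this l k hne.symm heq.symm (by omega)
  set i0 : Fin n := j^[k] ⟨0, hn⟩ with hi0
  have hper : j^[l - k] i0 = i0 := by
    rw [hi0, ← Function.iterate_add_apply]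
    rw [show l - k + k = l by omega]
    exact heq.symm
  have h := key (l - k) i0
  rw [hper] at h
  have hzero : (l - k) • b = 0 := by rwa [left_eq_add] at h
  have : R ((l - k) • b) 0 := hzero ▸ hrefl 0
  exact hb.1 (hP4' (l - k) (by omega) b this)
end

section
/- Assume R is transitive, isotone, and satisfies: for all m ≥ 1, integers p_1,...,p_m ≥ 1 and b^1,...,b^m ∈ B, (p_1 b^1 + ... + p_m b^m) R 0_G implies some b^l R 0_G. If A is finite and B = {b} with b incomparable to 0_G, and A + {b} ≠ A, then E(A + {b}) ≠ E(A). -/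
open Pointwise

theorem stmt_10 {G : Type*} [AddGroup G] (R : G → G → Prop) (A : Set G) (b : G)
    (hA : A.Nonempty) (hAfin : A.Finite)
    (hrefl : Reflexive R) (htrans : Transitive R) (hiso : IsotoneRel R)
    (hP4 : ∀ m : ℕ, 1 ≤ m → ∀ p : Fin m → ℕ, (∀ l, 1 ≤ p l) →
      ∀ bb : Fin m → G, (∀ l, bb l ∈ ({b} : Set G)) →
      R (List.ofFn fun l => p l • bb l).sum 0 → ∃ l, R (bb l) 0)
    (hb : ¬ R b 0 ∧ ¬ R 0 b)
    (hne : A + ({b} : Set G) ≠ A) :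
    Eff R (A + ({b} : Set G)) ≠ Eff R A := by
  intro h
  -- translation invariance of R
  have hRt : ∀ x y : G, R (x + b) (y + b) ↔ R x y := by
    intro x y
    constructor
    · intro hxy
      have := (hiso _ _ (-b) hxy).2
      simpa using this
    · intro hxy
      exact (hiso _ _ b hxy).2
  have hPt : ∀ x y : G, StrictPref R (x + b) (y + b) ↔ StrictPref R x y := by
    intro x y
    unfold StrictPref
    rw [hRt, hRt]
  -- Eff (A + {b}) = Eff A + {b}
  have hEff : Eff R (A + ({b} : Set G)) = Eff R A + ({b} : Set G) := by
    ext x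
    simp only [Set.add_singleton, Set.mem_image, Eff, Set.mem_setOf_eq]
    constructor
    · rintro ⟨⟨a, ha, rfl⟩, hmax⟩
      exact ⟨a, ⟨ha, fun a' ha' hP => hmax (a' + b) ⟨a', ha', rfl⟩ ((hPt a' a).2 hP)⟩, rfl⟩
    · rintro ⟨a, ⟨ha, hmax⟩, rfl⟩
      refine ⟨⟨a, ha, rfl⟩, ?_⟩
      rintro _ ⟨a', ha', rfl⟩ hP
      exact hmax a' ha' ((hPt a' a).1 hP)
  have hst : Eff R A + ({b} : Set G) = Eff R A := by rw [← hEff, h]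
  -- Eff R A is nonempty
  have hEffne : (Eff R A).Nonempty := by
    haveI := hAfin.to_subtype
    haveI : IsTrans A (fun x y : A => StrictPref R (x : G) (y : G)) := by
      constructor
      rintro x y z ⟨hxy, hnyx⟩ ⟨hyz, hnzy⟩
      refine ⟨htrans hxy hyz, fun hzx => hnzy (htrans hzx hxy)⟩
    haveI : IsIrrefl A (fun x y : A => StrictPref R (x : G) (y : G)) := by
      constructor
      rintro x ⟨h1, h2⟩
      exact h2 h1
    have hwf := Finite.wellFounded_of_trans_of_irrefl
      (fun x y : A => StrictPref R (x : G) (y : G))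
    obtain ⟨a, ha⟩ := hA
    obtain ⟨m, _, hm⟩ := hwf.has_min Set.univ ⟨⟨a, ha⟩, Set.mem_univ _⟩
    refine ⟨(m : G), m.2, fun g' hg' hP => hm ⟨g', hg'⟩ (Set.mem_univ _) hP⟩
  obtain ⟨a, haE⟩ := hEffne
  -- iterate translation
  have hiter : ∀ n : ℕ, a + n • b ∈ Eff R A := by
    intro n
    induction n with
    | zero => simpa using haE
    | succ n ih =>
      have hmem : (a + n • b) + b ∈ Eff R A + ({b} : Set G) :=
        Set.add_mem_add ih (Set.mem_singleton b)
      rw [hst] at hmem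
      rw [succ_nsmul, ← add_assoc]
      exact hmem
  -- pigeonhole
  haveI := hAfin.to_subtype
  have hf : ∃ n m' : ℕ, n ≠ m' ∧ (⟨a + n • b, (hiter n).1⟩ : A) = ⟨a + m' • b, (hiter m').1⟩ :=
    Finite.exists_ne_map_eq_of_infinite (fun n : ℕ => (⟨a + n • b, (hiter n).1⟩ : A))
  obtain ⟨n, m', hne', heq'⟩ := hf
  have heq : a + n • b = a + m' • b := congrArg Subtype.val heq'
  have heq2 : n • b = m' • b := add_left_cancel heq
  -- wlog n < m'
  rcases hne'.lt_or_gt with hlt | hlt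
  all_goals {
    first
    | (have hle : n ≤ m' := le_of_lt hlt
       have hk : (m' - n) • b = 0 := by
         have h1 : n • b + (m' - n) • b = n • b + 0 := by
           rw [← add_nsmul, Nat.add_sub_cancel' hle, add_zero]
           exact heq2.symm
         exact add_left_cancel h1
       have hpos : 1 ≤ m' - n := Nat.le_sub_of_add_le (by omega)
       have hsum : (List.ofFn fun _ : Fin 1 => (m' - n) • b).sum = (m' - n) • b := by simp
       obtain ⟨l, hl⟩ := hP4 1 le_rfl (fun _ => m' - n) (fun _ => hpos) (fun _ => b)
         (fun _ => rfl) (by rw [hsum, hk]; exact hrefl 0)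
       exact hb.1 hl)
    | (have hle : m' ≤ n := le_of_lt hlt
       have hk : (n - m') • b = 0 := by
         have h1 : m' • b + (n - m') • b = m' • b + 0 := by
           rw [← add_nsmul, Nat.add_sub_cancel' hle, add_zero]
           exact heq2
         exact add_left_cancel h1
       have hpos : 1 ≤ n - m' := Nat.le_sub_of_add_le (by omega)
       have hsum : (List.ofFn fun _ : Fin 1 => (n - m') • b).sum = (n - m') • b := by simp
       obtain ⟨l, hl⟩ := hP4 1 le_rfl (fun _ => n - m') (fun _ => hpos) (fun _ => b)
         (fun _ => rfl) (by rw [hsum, hk]; exact hrefl 0)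
       exact hb.1 hl)
  }
end

section
/- Assume R is transitive, isotone, and satisfies: for all m ≥ 1, integers p_1,...,p_m ≥ 1 and b^1,...,b^m ∈ B, (p_1 b^1 + ... + p_m b^m) R 0_G implies some b^l R 0_G. If A is finite and B = {b^1, ..., b^m}, m ≥ 2, with every b^i incomparable to 0_G, and A + B ≠ A, then E(A + B) ≠ E(A). -/
open Pointwise

lemma strictPref_trans_aux {G : Type*} {R : G → G → Prop} (htrans : Transitive R)
    {x y z : G} (h1 : StrictPref R x y) (h2 : StrictPref R y z) : StrictPref R x z :=
  ⟨htrans h1.1 h2.1, fun h => h2.2 (htrans h h1.1)⟩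

lemma eff_nonempty_aux {G : Type*} {R : G → G → Prop} (hrefl : Reflexive R)
    (htrans : Transitive R) :
    ∀ n : ℕ, ∀ S : Set G, ∀ hfin : S.Finite, hfin.toFinset.card ≤ n →
      S.Nonempty → (Eff R S).Nonempty := by
  intro n
  induction n with
  | zero =>
      intro S hfin hcard ⟨a, ha⟩
      exfalso
      have : a ∈ hfin.toFinset := hfin.mem_toFinset.mpr ha
      have := Finset.card_pos.mpr ⟨a, this⟩
      omega
  | succ n ih =>
      intro S hfin hcard ⟨a, ha⟩
      by_cases hmax : ∀ y ∈ S, ¬ StrictPref R y a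
      · exact ⟨a, ha, hmax⟩
      · push_neg at hmax
        obtain ⟨y0, hy0S, hy0⟩ := hmax
        set S' : Set G := {x ∈ S | StrictPref R x a} with hS'
        have hS'fin : S'.Finite := hfin.subset (fun x hx => hx.1)
        have hcard' : hS'fin.toFinset.card ≤ n := by
          have hss : hS'fin.toFinset ⊂ hfin.toFinset := by
            constructor
            · intro x hx
              exact hfin.mem_toFinset.mpr (hS'fin.mem_toFinset.mp hx).1
            · intro hsub
              have haS' : a ∈ S' := hS'fin.mem_toFinset.mp (hsub (hfin.mem_toFinset.mpr ha))
              exact haS'.2.2 haS'.2.1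
          have := Finset.card_lt_card hss
          omega
        obtain ⟨e, heS', hemax⟩ := ih S' hS'fin hcard' ⟨y0, hy0S, hy0⟩
        refine ⟨e, heS'.1, ?_⟩
        intro y hyS hP
        exact hemax y ⟨hyS, strictPref_trans_aux htrans hP heS'.2⟩ hP

theorem stmt_11 {G : Type*} [AddGroup G] (R : G → G → Prop) (A : Set G)
    (m : ℕ) (hm : 2 ≤ m) (b : Fin m → G)
    (hA : A.Nonempty) (hAfin : A.Finite)
    (hrefl : Reflexive R) (htrans : Transitive R) (hiso : IsotoneRel R)
    (hP4 : ∀ k : ℕ, 1 ≤ k → ∀ p : Fin k → ℕ, (∀ l, 1 ≤ p l) →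
      ∀ bb : Fin k → G, (∀ l, bb l ∈ Set.range b) →
      R (List.ofFn fun l => p l • bb l).sum 0 → ∃ l, R (bb l) 0)
    (hb : ∀ i, ¬ R (b i) 0 ∧ ¬ R 0 (b i))
    (hne : A + Set.range b ≠ A) :
    Eff R (A + Set.range b) ≠ Eff R A := by
  intro heq
  classical
  -- Eff R A is nonempty
  obtain ⟨x₀, hx₀⟩ := eff_nonempty_aux hrefl htrans hAfin.toFinset.card A hAfin le_rfl hA
  -- Key lemma: every efficient point of A decomposes as (efficient point) + (element of B)
  have L : ∀ x : {z : G // z ∈ Eff R A},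
      ∃ q : {z : G // z ∈ Eff R A} × G, q.2 ∈ Set.range b ∧ (x : G) = (q.1 : G) + q.2 := by
    rintro ⟨x, hx⟩
    have hxAB : x ∈ Eff R (A + Set.range b) := heq.symm ▸ hx
    obtain ⟨y, hy, v, hv, hyv⟩ := Set.mem_add.mp hxAB.1
    have hyE : y ∈ Eff R A := by
      refine ⟨hy, ?_⟩
      intro c hc hP
      have h1 : R (c + v) (y + v) := (hiso c y v hP.1).2
      have h2 : ¬ R (y + v) (c + v) := by
        intro h
        have := (hiso (y + v) (c + v) (-v) h).2
        simp only [add_neg_cancel_right] at this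
        exact hP.2 this
      have hcv : c + v ∈ A + Set.range b := Set.add_mem_add hc hv
      have : StrictPref R (c + v) x := by rw [← hyv]; exact ⟨h1, h2⟩
      exact hxAB.2 (c + v) hcv this
    exact ⟨(⟨y, hyE⟩, v), hv, hyv.symm⟩
  choose nxt hnxt1 hnxt2 using L
  set f : {z : G // z ∈ Eff R A} → {z : G // z ∈ Eff R A} := fun x => (nxt x).1 with hf
  set F : ℕ → {z : G // z ∈ Eff R A} := fun n => f^[n] ⟨x₀, hx₀⟩ with hF
  set c : ℕ → G := fun n => (nxt (F n)).2 with hcdef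
  have hc : ∀ n, c n ∈ Set.range b := fun n => hnxt1 (F n)
  have hstep : ∀ n, (F n : G) = (F (n + 1) : G) + c n := by
    intro n
    have : F (n + 1) = f (F n) := by
      simp only [hF, Function.iterate_succ_apply']
    rw [this]
    exact hnxt2 (F n)
  -- telescoping
  have key : ∀ k n, (F n : G) =
      (F (n + k) : G) + (List.ofFn fun l : Fin k => c (n + (k - 1 - (l : ℕ)))).sum := by
    intro k
    induction k with
    | zero => intro n; simp
    | succ k ih =>
        intro n
        have h1 : (F n : G) = (F (n + 1) : G) + c n := hstep n
        have h2 := ih (n + 1)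
        have hlist : (List.ofFn fun l : Fin (k + 1) => c (n + (k + 1 - 1 - (l : ℕ)))).sum
            = (List.ofFn fun l : Fin k => c ((n + 1) + (k - 1 - (l : ℕ)))).sum + c n := by
          rw [List.ofFn_succ']
          rw [List.concat_eq_append, List.sum_append]
          simp only [Fin.val_last, List.sum_cons, List.sum_nil, add_zero]
          have e1 : (fun i : Fin k => c (n + (k + 1 - 1 - ((i.castSucc : Fin (k+1)) : ℕ))))
              = fun i : Fin k => c ((n + 1) + (k - 1 - (i : ℕ))) := by
            funext i
            have hi : (i : ℕ) < k := i.isLt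
            simp only [Fin.coe_castSucc]
            congr 1
            omega
          rw [e1]
          congr 2
          omega
        rw [hlist, show n + (k + 1) = (n + 1) + k from by omega, ← add_assoc, ← h2]
        exact h1
  -- pigeonhole: F is not injective into finite A
  have hmaps : Set.MapsTo (fun n : ℕ => (F n : G)) Set.univ A := fun n _ => (F n).2.1
  obtain ⟨i, -, j, -, hij, hfij⟩ :=
    Set.infinite_univ.exists_ne_map_eq_of_mapsTo hmaps hAfin
  have hexists : ∃ i j : ℕ, i < j ∧ (F i : G) = (F j : G) := by
    rcases hij.lt_or_gt with h | h
    · exact ⟨i, j, h, hfij⟩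
    · exact ⟨j, i, h, hfij.symm⟩
  obtain ⟨i, j, hlt, hFij⟩ := hexists
  set k : ℕ := j - i with hk
  have hk1 : 1 ≤ k := by omega
  have hjik : j = i + k := by omega
  have hkey := key k i
  rw [← hjik, ← hFij] at hkey
  have hsum0 : (List.ofFn fun l : Fin k => c (i + (k - 1 - (l : ℕ)))).sum = 0 := by
    have := hkey.symm
    nth_rewrite 2 [← add_zero (F i : G)] at this
    exact (add_left_cancel this)
  obtain ⟨l, hl⟩ := hP4 k hk1 (fun _ => 1) (fun _ => le_rfl)
    (fun l : Fin k => c (i + (k - 1 - (l : ℕ)))) (fun l => hc _)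
    (by simp only [one_nsmul]; rw [hsum0]; exact hrefl 0)
  obtain ⟨t, ht⟩ := hc (i + (k - 1 - (l : ℕ)))
  rw [← ht] at hl
  exact (hb t).1 hl
end

section
/- Assume R is transitive and isotone, and satisfies: for all p ≥ 1 and b ∈ G, 0_G R (pb) implies 0_G R b. Let a^1, ..., a^n be n ≥ 2 distinct points of G, b ∈ G incomparable with 0_G, and i_1, ..., i_n ∈ {1,...,n} with i_j ≠ j for each j. Then the system a^{i_j} P (a^j + b) for all j = 1,...,n is inconsistent (cannot all hold simultaneously). -/
open Pointwise

theorem stmt_12 {G : Type*} [AddGroup G] (R : G → G → Prop)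
    (hrefl : Reflexive R) (htrans : Transitive R) (hiso : IsotoneRel R)
    (hP5' : ∀ p : ℕ, 1 ≤ p → ∀ c : G, R 0 (p • c) → R 0 c)
    (n : ℕ) (hn : 2 ≤ n) (a : Fin n → G) (hinj : Function.Injective a)
    (b : G) (hb : ¬ R b 0 ∧ ¬ R 0 b)
    (i : Fin n → Fin n) (hi : ∀ j, i j ≠ j)
    (hsys : ∀ j, StrictPref R (a (i j)) (a j + b)) :
    False := by
  -- pigeonhole: iterates of i on a starting point repeat
  have hn0 : 0 < n := by omega
  obtain ⟨m, m', hne, heq⟩ :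
      ∃ m m' : ℕ, m ≠ m' ∧ i^[m] ⟨0, hn0⟩ = i^[m'] ⟨0, hn0⟩ := by
    obtain ⟨m, m', hne, heq⟩ :=
      Finite.exists_ne_map_eq_of_infinite (fun t : ℕ => i^[t] ⟨0, hn0⟩)
    exact ⟨m, m', hne, heq⟩
  -- WLOG m < m'
  wlog hlt : m < m' generalizing m m'
  · exact this m' m hne.symm heq.symm (by omega)
  set x : Fin n := i^[m] ⟨0, hn0⟩ with hx
  have hcyc : i^[m' - m] x = x := by
    have : i^[m' - m] (i^[m] ⟨0, hn0⟩) = i^[m'] ⟨0, hn0⟩ := by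
      rw [← Function.iterate_add_apply]
      congr 1; omega
    rw [hx, this, ← heq]
  -- chain the preferences
  have key : ∀ t : ℕ, R (a (i^[t] x)) (a x + t • b) := by
    intro t
    induction t with
    | zero => simpa using hrefl (a x)
    | succ t ih =>
      have h1 : R (a (i (i^[t] x))) (a (i^[t] x) + b) := (hsys (i^[t] x)).1
      have h2 : R (a (i^[t] x) + b) (a x + t • b + b) := (hiso _ _ b ih).2
      have h3 : R (a (i (i^[t] x))) (a x + t • b + b) := htrans h1 h2
      have : a x + t • b + b = a x + (t + 1) • b := by
        rw [add_assoc, succ_nsmul]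
      rw [Function.iterate_succ_apply', ← this]
      exact h3
  have hk : R (a x) (a x + (m' - m) • b) := by
    have := key (m' - m); rwa [hcyc] at this
  have h0 : R 0 ((m' - m) • b) := by
    have := (hiso _ _ (-(a x)) hk).1
    simpa [← add_assoc] using this
  exact hb.2 (hP5' (m' - m) (by omega) b h0)
end

section
/- Suppose A is finite, R is transitive and isotone, and satisfies: for all m ≥ 1, integers p_1,...,p_m ≥ 1 and b^1,...,b^m ∈ B, 0_G R (p_1 b^1 + ... + p_m b^m) implies 0_G R b^l for some l. If A is stable and B = {0_G, b} with b incomparable to 0_G, and A + B ≠ A, then E(A + B) ≠ E(A). -/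
open Pointwise

/-- On a finite set, every element is dominated by an efficient element. -/
theorem exists_eff_dom {G : Type*} (R : G → G → Prop)
    (hrefl : Reflexive R) (htrans : Transitive R)
    {S : Set G} (hS : S.Finite) : ∀ x ∈ S, ∃ e ∈ Eff R S, R e x := by
  have key : ∀ n : ℕ, ∀ x ∈ S, {y ∈ S | StrictPref R y x}.ncard ≤ n →
      ∃ e ∈ Eff R S, R e x := by
    intro n
    induction n with
    | zero =>
      intro x hx hcard
      by_cases hxe : x ∈ Eff R S
      · exact ⟨x, hxe, hrefl x⟩
      · have : ∃ y ∈ S, StrictPref R y x := by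
          simp only [Eff, Set.mem_setOf_eq] at hxe
          push_neg at hxe
          exact hxe hx
        obtain ⟨y, hy, hyx⟩ := this
        have hne : ({y' ∈ S | StrictPref R y' x}).Nonempty := ⟨y, hy, hyx⟩
        have hfin : ({y' ∈ S | StrictPref R y' x}).Finite :=
          hS.subset (Set.sep_subset _ _)
        have := Set.ncard_pos hfin |>.mpr hne
        omega
    | succ n ih =>
      intro x hx hcard
      by_cases hxe : x ∈ Eff R S
      · exact ⟨x, hxe, hrefl x⟩
      · have : ∃ y ∈ S, StrictPref R y x := by
          simp only [Eff, Set.mem_setOf_eq] at hxe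
          push_neg at hxe
          exact hxe hx
        obtain ⟨y, hy, hyx⟩ := this
        have hsub : {z ∈ S | StrictPref R z y} ⊂ {z ∈ S | StrictPref R z x} := by
          constructor
          · rintro z ⟨hz, hzy⟩
            refine ⟨hz, htrans hzy.1 hyx.1, fun hxz => hyx.2 (htrans hxz hzy.1)⟩
          · intro h
            have : y ∈ {z ∈ S | StrictPref R z y} := h ⟨hy, hyx⟩
            exact this.2.2 this.2.1
        have hfin : ({z ∈ S | StrictPref R z x}).Finite :=
          hS.subset (Set.sep_subset _ _)
        have hlt := Set.ncard_lt_ncard hsub hfin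
        obtain ⟨e, he, hey⟩ := ih y hy (by omega)
        exact ⟨e, he, htrans hey hyx.1⟩
  intro x hx
  exact key _ x hx le_rfl

theorem stmt_13 {G : Type*} [AddGroup G] (R : G → G → Prop) (A : Set G) (b : G)
    (hA : A.Nonempty) (hAfin : A.Finite)
    (hrefl : Reflexive R) (htrans : Transitive R) (hiso : IsotoneRel R)
    (hP5 : ∀ m : ℕ, 1 ≤ m → ∀ p : Fin m → ℕ, (∀ l, 1 ≤ p l) →
      ∀ bb : Fin m → G, (∀ l, bb l ∈ ({0, b} : Set G)) →
      R 0 (List.ofFn fun l => p l • bb l).sum → ∃ l, R 0 (bb l))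
    (hstable : Eff R A = A)
    (hb : ¬ R b 0 ∧ ¬ R 0 b)
    (hne : A + ({0, b} : Set G) ≠ A) :
    Eff R (A + ({0, b} : Set G)) ≠ Eff R A := by
  intro heq
  have heqA : Eff R (A + ({0, b} : Set G)) = A := heq.trans hstable
  have hBfin : (({0, b} : Set G)).Finite := (Set.finite_singleton b).insert 0
  have hSfin : (A + ({0, b} : Set G)).Finite := hAfin.add hBfin
  -- step: every a ∈ A has a' ∈ A with R a' (a + b)
  have step : ∀ a ∈ A, ∃ a' ∈ A, R a' (a + b) := by
    intro a ha
    have hmem : a + b ∈ A + ({0, b} : Set G) :=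
      Set.add_mem_add ha (by simp)
    obtain ⟨e, he, her⟩ := exists_eff_dom R hrefl htrans hSfin (a + b) hmem
    rw [heqA] at he
    exact ⟨e, he, her⟩
  -- build a sequence
  obtain ⟨a0, ha0⟩ := hA
  let f : ℕ → {x // x ∈ A} := fun n => Nat.rec ⟨a0, ha0⟩
    (fun _ prev => ⟨(step prev.1 prev.2).choose, (step prev.1 prev.2).choose_spec.1⟩) n
  have hstep : ∀ k, R (f (k+1)).1 ((f k).1 + b) := by
    intro k
    exact (step (f k).1 (f k).2).choose_spec.2
  have hchain : ∀ k n : ℕ, R (f (k+n)).1 ((f k).1 + n • b) := by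
    intro k n
    induction n with
    | zero => simpa using hrefl (f k).1
    | succ n ihn =>
      have h1 : R (f (k+n+1)).1 ((f (k+n)).1 + b) := hstep (k+n)
      have h2 : R ((f (k+n)).1 + b) ((f k).1 + n • b + b) := (hiso _ _ b ihn).2
      have := htrans h1 h2
      have heqn : (f k).1 + n • b + b = (f k).1 + (n+1) • b := by
        rw [succ_nsmul, add_assoc]
      rw [heqn] at this
      exact this
  -- finiteness gives repetition
  have : ∃ i ∈ (Set.univ : Set ℕ), ∃ j ∈ (Set.univ : Set ℕ), i ≠ j ∧
      (f i).1 = (f j).1 := by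
    apply Set.infinite_univ.exists_ne_map_eq_of_mapsTo (f := fun n => (f n).1)
      (fun n _ => (f n).2) hAfin
  obtain ⟨i, -, j, -, hij, hfij⟩ := this
  wlog hlt : i < j generalizing i j
  · exact this j i hij.symm hfij.symm (by omega)
  obtain ⟨n, hn, rfl⟩ : ∃ n, 1 ≤ n ∧ j = i + n := ⟨j - i, by omega, by omega⟩
  have hR : R (f i).1 ((f i).1 + n • b) := by
    have := hchain i n
    rwa [← hfij] at this
  have hR0 : R 0 (n • b) := by
    have := (hiso _ _ (-(f i).1) hR).1
    rwa [neg_add_cancel, neg_add_cancel_left] at this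
  have := hP5 1 le_rfl (fun _ => n) (fun _ => hn) (fun _ => b) (fun _ => by simp)
    (by simpa using hR0)
  obtain ⟨l, hl⟩ := this
  exact hb.2 hl
end

section
/- Suppose A is finite, R is transitive and isotone, and satisfies: for all integers p_1,...,p_m ≥ 1 and b^1,...,b^m ∈ B, 0_G R (p_1 b^1 + ... + p_m b^m) implies 0_G R b^l for some l. If A is stable and B = {0_G, b^1, ..., b^m} with m ≥ 2 and every b^l incomparable to 0_G, and A + B ≠ A, then E(A + B) ≠ E(A). -/
open Pointwise

/-- In a finite set, every element is either efficient or strictly dominated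
by an efficient element. -/
lemma eff_dom {G : Type*} (R : G → G → Prop) (htrans : Transitive R)
    {S : Set G} (hS : S.Finite) {x : G} (hx : x ∈ S) :
    ∃ e ∈ Eff R S, e = x ∨ StrictPref R e x := by
  classical
  have hPtrans : ∀ {u v w : G}, StrictPref R u v → StrictPref R v w → StrictPref R u w := by
    rintro u v w ⟨h1, h2⟩ ⟨h3, h4⟩
    exact ⟨htrans h1 h3, fun h => h4 (htrans h h1)⟩
  have key : ∀ n : ℕ, ∀ x ∈ S, {y ∈ S | StrictPref R y x}.ncard ≤ n →
      ∃ e ∈ Eff R S, e = x ∨ StrictPref R e x := by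
    intro n
    induction n with
    | zero =>
      intro x hx hn
      by_cases hxe : x ∈ Eff R S
      · exact ⟨x, hxe, Or.inl rfl⟩
      · exfalso
        simp only [Eff, Set.mem_setOf_eq, not_and, not_forall] at hxe
        obtain ⟨y, hyS, hPyx⟩ := hxe hx
        push_neg at hPyx
        have hy : y ∈ {y ∈ S | StrictPref R y x} := ⟨hyS, hPyx⟩
        have : 1 ≤ {y ∈ S | StrictPref R y x}.ncard := by
          have hfin : {y ∈ S | StrictPref R y x}.Finite := hS.subset (fun z hz => hz.1)
          exact (Set.ncard_pos hfin).mpr ⟨y, hy⟩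
        omega
    | succ n ih =>
      intro x hx hn
      by_cases hxe : x ∈ Eff R S
      · exact ⟨x, hxe, Or.inl rfl⟩
      · simp only [Eff, Set.mem_setOf_eq, not_and, not_forall] at hxe
        obtain ⟨y, hyS, hPyx⟩ := hxe hx
        push_neg at hPyx
        have hsub : {z ∈ S | StrictPref R z y} ⊆ {z ∈ S | StrictPref R z x} :=
          fun z hz => ⟨hz.1, hPtrans hz.2 hPyx⟩
        have hynot : y ∉ {z ∈ S | StrictPref R z y} := by
          rintro ⟨-, h1, h2⟩; exact h2 h1
        have hymem : y ∈ {z ∈ S | StrictPref R z x} := ⟨hyS, hPyx⟩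
        have hlt : {z ∈ S | StrictPref R z y}.ncard < {z ∈ S | StrictPref R z x}.ncard := by
          refine Set.ncard_lt_ncard ⟨hsub, fun h => hynot (h hymem)⟩
            (hS.subset (fun z hz => hz.1))
        obtain ⟨e, he, heq⟩ := ih y hyS (by omega)
        refine ⟨e, he, Or.inr ?_⟩
        rcases heq with rfl | hPey
        · exact hPyx
        · exact hPtrans hPey hPyx
  exact key _ x hx le_rfl

theorem stmt_14 {G : Type*} [AddGroup G] (R : G → G → Prop) (A : Set G)
    (m : ℕ) (hm : 2 ≤ m) (b : Fin m → G)
    (hA : A.Nonempty) (hAfin : A.Finite)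
    (hrefl : Reflexive R) (htrans : Transitive R) (hiso : IsotoneRel R)
    (hP5 : ∀ k : ℕ, 1 ≤ k → ∀ p : Fin k → ℕ, (∀ l, 1 ≤ p l) →
      ∀ bb : Fin k → G, (∀ l, bb l ∈ insert (0 : G) (Set.range b)) →
      R 0 (List.ofFn fun l => p l • bb l).sum → ∃ l, R 0 (bb l))
    (hstable : Eff R A = A)
    (hb : ∀ i, ¬ R (b i) 0 ∧ ¬ R 0 (b i))
    (hne : A + insert (0 : G) (Set.range b) ≠ A) :
    Eff R (A + insert (0 : G) (Set.range b)) ≠ Eff R A := by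
  classical
  intro h
  have hBfin : (insert (0 : G) (Set.range b)).Finite := (Set.finite_range b).insert 0
  have hABfin : (A + insert (0 : G) (Set.range b)).Finite := hAfin.add hBfin
  have hEff : Eff R (A + insert (0 : G) (Set.range b)) = A := h.trans hstable
  set c : G := b ⟨0, by omega⟩ with hc
  have hcB : c ∈ insert (0 : G) (Set.range b) := Set.mem_insert_iff.mpr (Or.inr ⟨_, rfl⟩)
  have claim : ∀ a ∈ A, ∃ a' ∈ A, R a' (a + c) := by
    intro a ha
    have hac : a + c ∈ A + insert (0 : G) (Set.range b) := Set.add_mem_add ha hcB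
    by_cases hacA : a + c ∈ A
    · exact ⟨a + c, hacA, hrefl _⟩
    · obtain ⟨e, he, heq⟩ := eff_dom R htrans hABfin hac
      rw [hEff] at he
      rcases heq with rfl | hP
      · exact absurd he hacA
      · exact ⟨e, he, hP.1⟩
  obtain ⟨a₀, ha₀⟩ := hA
  haveI : Finite A := hAfin
  let F : A → A := fun a => ⟨(claim a a.2).choose, ((claim a a.2).choose_spec).1⟩
  have hF : ∀ a : A, R (F a : G) ((a : G) + c) := fun a => ((claim a a.2).choose_spec).2
  let seq : ℕ → A := fun n => F^[n] ⟨a₀, ha₀⟩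
  have hseq : ∀ n, R (seq (n + 1) : G) ((seq n : G) + c) := by
    intro n
    have : seq (n + 1) = F (seq n) := Function.iterate_succ_apply' F n _
    rw [this]; exact hF _
  have chain : ∀ d : ℕ, ∀ n, R (seq (n + (d + 1)) : G) ((seq n : G) + (d + 1) • c) := by
    intro d
    induction d with
    | zero => intro n; simpa using hseq n
    | succ d ih =>
      intro n
      have h1 : R (seq (n + (d + 2)) : G) ((seq (n + (d + 1)) : G) + c) := by
        have := hseq (n + (d + 1))
        have heq : n + (d + 1) + 1 = n + (d + 2) := by omega
        rwa [heq] at this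
      have h3 := (hiso _ _ c (ih n)).2
      have h4 : R (seq (n + (d + 2)) : G) ((seq n : G) + (d + 1) • c + c) := htrans h1 h3
      have h5 : (seq n : G) + (d + 1) • c + c = (seq n : G) + (d + 2) • c := by
        rw [add_assoc, ← succ_nsmul]
      rwa [h5] at h4
  obtain ⟨j, k, hjk, heqjk⟩ := Finite.exists_ne_map_eq_of_infinite seq
  wlog hlt : j < k generalizing j k
  · exact this k j hjk.symm heqjk.symm (by omega)
  obtain ⟨d, rfl⟩ : ∃ d, k = j + (d + 1) := ⟨k - j - 1, by omega⟩
  have hcyc : R (seq j : G) ((seq j : G) + (d + 1) • c) := by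
    have := chain d j
    rwa [← heqjk] at this
  have h0 : R 0 ((d + 1) • c) := by
    have := (hiso _ _ (-(seq j : G)) hcyc).1
    rwa [neg_add_cancel, ← add_assoc, neg_add_cancel, zero_add] at this
  have hsum : (List.ofFn fun _ : Fin 1 => (d + 1) • c).sum = (d + 1) • c := by simp
  obtain ⟨l, hl⟩ := hP5 1 le_rfl (fun _ => d + 1) (fun _ => Nat.le_add_left 1 d) (fun _ => c)
    (fun _ => hcB) (by rwa [hsum])
  exact (hb _).2 hl
end

section
/- Assume R is transitive and isotone, and for all p ≥ 1 and b ∈ G, (pb)R0_G implies bR0_G. Let A = {a^1,...,a^n} ⊆ G with n ≥ 2, b ∈ G incomparable with 0_G, 1 ≤ k ≤ n-1, indices j_1,...,j_k ∈ {1,...,n} and i_{k+1},...,i_n ∈ {1,...,k}. Then the combined system a^t = a^{j_t} + b for t = 1,...,k, together with a^{i_s} P a^s for s = k+1,...,n, is inconsistent. -/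
open Pointwise

theorem stmt_18 {G : Type*} [AddGroup G] (R : G → G → Prop)
    (hrefl : Reflexive R) (htrans : Transitive R) (hiso : IsotoneRel R)
    (hP4' : ∀ p : ℕ, 1 ≤ p → ∀ c : G, R (p • c) 0 → R c 0)
    (n : ℕ) (hn : 2 ≤ n) (a : Fin n → G) (hinj : Function.Injective a)
    (b : G) (hb : ¬ R b 0 ∧ ¬ R 0 b)
    (k : ℕ) (hk1 : 1 ≤ k) (hkn : k ≤ n - 1)
    (j : Fin n → Fin n) (i : Fin n → Fin n)
    (hi : ∀ s : Fin n, k ≤ (s : ℕ) → (i s : ℕ) < k)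
    (heq : ∀ t : Fin n, (t : ℕ) < k → a t = a (j t) + b)
    (hdom : ∀ s : Fin n, k ≤ (s : ℕ) → StrictPref R (a (i s)) (a s)) :
    False := by
  classical
  set f : Fin n → Fin n := fun t => if (t : ℕ) < k then j t else i t with hf
  -- find a cycle of f
  obtain ⟨r, s, hne, hes⟩ :=
    Finite.exists_ne_map_eq_of_infinite (fun r : ℕ => f^[r] (⟨0, by omega⟩ : Fin n))
  wlog hrs : r < s generalizing r s
  · exact this s r hne.symm hes.symm (by omega)
  set y0 : Fin n := f^[r] (⟨0, by omega⟩ : Fin n) with hy0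
  set m : ℕ := s - r with hmm
  have hm1 : 1 ≤ m := by omega
  have hcyc : f^[m] y0 = y0 := by
    rw [hy0, ← Function.iterate_add_apply]
    have : m + r = s := by omega
    rw [this]; exact hes.symm
  have key : ∀ r' : ℕ, ∃ q : ℕ, R (a (f^[r'] y0) + q • b) (a y0) ∧
      (1 ≤ q ∨ ∀ u < r', k ≤ ((f^[u] y0 : Fin n) : ℕ)) := by
    intro r'
    induction r' with
    | zero => exact ⟨0, by simpa using hrefl (a y0), Or.inr (by omega)⟩
    | succ r' ih =>
      obtain ⟨q, hq, hq1⟩ := ih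
      by_cases hlt : ((f^[r'] y0 : Fin n) : ℕ) < k
      · refine ⟨q + 1, ?_, Or.inl (by omega)⟩
        have hstep : f^[r' + 1] y0 = j (f^[r'] y0) := by
          rw [Function.iterate_succ_apply']; exact if_pos hlt
        have hab : a (f^[r'] y0) = a (j (f^[r'] y0)) + b := heq _ hlt
        have hre : a (j (f^[r'] y0)) + (q + 1) • b = a (f^[r'] y0) + q • b := by
          rw [succ_nsmul' b q, ← add_assoc, ← hab]
        rw [hstep, hre]; exact hq
      · push_neg at hlt
        have hstep : f^[r' + 1] y0 = i (f^[r'] y0) := by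
          rw [Function.iterate_succ_apply']; exact if_neg (Nat.not_lt.mpr hlt)
        have hpref := (hdom _ hlt).1
        have hiso' := (hiso _ _ (q • b) hpref).2
        refine ⟨q, ?_, ?_⟩
        · rw [hstep]; exact htrans hiso' hq
        · rcases hq1 with h1 | h2
          · exact Or.inl h1
          · refine Or.inr fun u hu => ?_
            rcases Nat.lt_succ_iff_lt_or_eq.mp hu with h | h
            · exact h2 u h
            · subst h; exact hlt
  obtain ⟨q, hq, hq1⟩ := key m
  rw [hcyc] at hq
  have hq1' : 1 ≤ q := by
    rcases hq1 with h1 | h2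
    · exact h1
    · exfalso
      have h0 : k ≤ (y0 : ℕ) := h2 0 (by omega)
      have hiy : (i y0 : ℕ) < k := hi y0 h0
      have hfy : f y0 = i y0 := by rw [hf]; simp [Nat.not_lt.mpr h0]
      rcases eq_or_lt_of_le hm1 with hm | hm
      · -- m = 1 : fixed point
        have : f^[1] y0 = y0 := by rw [← hm] at hcyc; exact hcyc
        simp [hfy] at this
        rw [this] at hiy; omega
      · have := h2 1 hm
        simp [hfy] at this
        omega
  -- from R (a y0 + q•b) (a y0) deduce R (q•b) 0
  have h3 := (hiso _ _ (-(a y0)) hq).1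
  simp only [neg_add_cancel_left, neg_add_cancel] at h3
  exact hb.1 (hP4' q hq1' b h3)
end
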